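/- arXiv:1801.04816 — 2 statements merged into one kernel-verified Lean document; each statement's English description precedes it below -/
import Mathlib

section
/- With the extended Fisher information matrix F̄(p) reordered as F̄₁(p) = P F̄(p) Pᵀ, and R(p) the weighted rigidity matrix of the ranging graph, one has F̄₁(p) = R(p)ᵀ R(p). -/
open Matrix

/-- Euclidean distance between points `(x i, y i)` and `(x j, y j)`. -/
noncomputable def edist2 {N : ℕ} (x y : Fin N → ℝ) (i j : Fin N) : ℝ :=
  Real.sqrt ((x i - x j) ^ 2 + (y i - y j) ^ 2)

/-- Off-diagonal 2×2 block `F_ij` of the Fisher information matrix. -/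
noncomputable def offBlock {N : ℕ} (x y : Fin N → ℝ) (Adj : Fin N → Fin N → Bool)
    (σ α : ℝ) (i j : Fin N) : Matrix (Fin 2) (Fin 2) ℝ :=
  -((if Adj i j then (1 : ℝ) else 0) / (σ ^ 2 * edist2 x y i j ^ (2 * α))) •
    !![(x i - x j) ^ 2, (x i - x j) * (y i - y j);
       (x i - x j) * (y i - y j), (y i - y j) ^ 2]

/-- The 2×2 block of the extended FIM: `F_ii = -∑_{k ∈ N_i} F_ik`, `F_ij` off the diagonal. -/
noncomputable def fimBlock {N : ℕ} (x y : Fin N → ℝ) (Adj : Fin N → Fin N → Bool)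
    (σ α : ℝ) (i j : Fin N) : Matrix (Fin 2) (Fin 2) ℝ :=
  if i = j then
    -∑ k ∈ Finset.univ.filter (fun k => Adj i k = true), offBlock x y Adj σ α i k
  else offBlock x y Adj σ α i j

/-- Extended Fisher information matrix `F̄(p)`, indexed by (vertex, coordinate), i.e. in the
interleaved coordinate ordering `(x₁, y₁, …, x_N, y_N)`. -/
noncomputable def Fbar {N : ℕ} (x y : Fin N → ℝ) (Adj : Fin N → Fin N → Bool)
    (σ α : ℝ) : Matrix (Fin N × Fin 2) (Fin N × Fin 2) ℝ :=
  Matrix.of fun r c => fimBlock x y Adj σ α r.1 c.1 r.2 c.2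

/-- Permutation matrix reordering coordinates from `(x₁, y₁, …, x_N, y_N)` to
`(x₁, …, x_N, y₁, …, y_N)`. -/
def permP (N : ℕ) : Matrix (Fin 2 × Fin N) (Fin N × Fin 2) ℝ :=
  Matrix.of fun r c => if r = (c.2, c.1) then 1 else 0

/-- Reordered extended FIM `F̄₁(p) = P F̄(p) Pᵀ`. -/
noncomputable def Fbar1 {N : ℕ} (x y : Fin N → ℝ) (Adj : Fin N → Fin N → Bool)
    (σ α : ℝ) : Matrix (Fin 2 × Fin N) (Fin 2 × Fin N) ℝ :=
  permP N * Fbar x y Adj σ α * (permP N)ᵀ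

/-- The weighted rigidity matrix `R(p)`: one row per (oriented) edge `e = (e1 e, e2 e)`,
columns ordered as `(x₁, …, x_N, y₁, …, y_N)`.  The row of edge `(i,j)` has entry
`(μ_i - μ_j)/(σ d_ij^α)` in the `μ`-column of `i` and the opposite in the `μ`-column of `j`. -/
noncomputable def rigidityR {N : ℕ} (x y : Fin N → ℝ) (σ α : ℝ) {ι : Type*}
    (e1 e2 : ι → Fin N) : Matrix ι (Fin 2 × Fin N) ℝ :=
  Matrix.of fun e c =>
    ((![x, y] c.1 (e1 e) - ![x, y] c.1 (e2 e)) / (σ * edist2 x y (e1 e) (e2 e) ^ α)) *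
      (if c.2 = e1 e then 1 else if c.2 = e2 e then -1 else 0)

/-
Row `e` of `R(p)` is `w_e (p_{e1} - p_{e2}) ⊗ s_e`, where `w_e = 1 / (σ d^α)` and `s_e` is the
signed incidence vector of the edge. Hence `R(p)ᵀ R(p) = ∑_e G_e ⊗ s_e s_eᵀ` with the rank-one
block `G_e = w_e² δ_e δ_eᵀ`, and summing `s_e s_eᵀ` over a list of the edges, each in exactly one
orientation, gives the Laplacian pattern of the graph: `∑_{k ∈ N_i} G_ik` on the diagonal and
`-G_ij` for adjacent `i ≠ j`. This is the block structure of `F̄(p)`, since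
`σ² d^{2α} = (σ d^α)²` for `d ≥ 0`.
-/

open Finset

section IncidenceSign

variable {V : Type*} [DecidableEq V]

def incidenceSign {R : Type*} [Ring R] (p q v : V) : R :=
  if v = p then 1 else if v = q then -1 else 0

lemma incidenceSign_of_ne {R : Type*} [Ring R] {p q : V} (h : p ≠ q) (v : V) :
    (incidenceSign p q v : R) = (if v = p then 1 else 0) - (if v = q then 1 else 0) := by
  unfold incidenceSign
  by_cases hp : v = p
  · subst hp; simp [h]
  · by_cases hq : v = q
    · subst hq; simp [Ne.symm h]
    · simp [hp, hq]

lemma incidenceSign_mul_incidenceSign {R : Type*} [CommRing R] {p q : V} (h : p ≠ q) (i j : V) :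
    (incidenceSign p q i * incidenceSign p q j : R) =
      (if i = p then incidenceSign p q j else 0) + (if i = q then incidenceSign q p j else 0) := by
  rw [incidenceSign_of_ne h, incidenceSign_of_ne h, incidenceSign_of_ne h.symm]
  by_cases hp : i = p
  · subst hp; simp [h]
  · by_cases hq : i = q
    · subst hq; simp [Ne.symm h]
    · simp [hp, hq]

end IncidenceSign

section OrientedEdges

variable {V ι : Type*} [Fintype V] [Fintype ι] (Adj : V → V → Bool) (e1 e2 : ι → V)

/- Each ordered adjacent pair `(p, q)` comes from exactly one edge `e`, taken in exactly one of its
two orientations. -/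
lemma sum_add_swap_eq_sum_adj {M : Type*} [AddCommMonoid M]
    (hsym : ∀ i j, Adj i j = Adj j i) (hirr : ∀ i, Adj i i = false)
    (hedge : ∀ e : ι, Adj (e1 e) (e2 e) = true)
    (huniq : ∀ i j, Adj i j = true →
      ∃! e : ι, (e1 e = i ∧ e2 e = j) ∨ (e1 e = j ∧ e2 e = i))
    (F : V → V → M) :
    ∑ e, (F (e1 e) (e2 e) + F (e2 e) (e1 e)) =
      ∑ p, ∑ q ∈ univ.filter (fun q => Adj p q = true), F p q := by
  let orient : ι × Bool → V × V := fun eb =>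
    if eb.2 then (e1 eb.1, e2 eb.1) else (e2 eb.1, e1 eb.1)
  have hadj : ∀ eb, Adj (orient eb).1 (orient eb).2 = true := by
    rintro ⟨e, _ | _⟩ <;> simp [orient, hedge, hsym (e2 e)]
  have hends : ∀ eb, (e1 eb.1 = (orient eb).1 ∧ e2 eb.1 = (orient eb).2) ∨
      (e1 eb.1 = (orient eb).2 ∧ e2 eb.1 = (orient eb).1) := by
    rintro ⟨e, _ | _⟩ <;> simp [orient]
  calc ∑ e, (F (e1 e) (e2 e) + F (e2 e) (e1 e))
      = ∑ eb : ι × Bool, F (orient eb).1 (orient eb).2 := by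
        simp [orient, Fintype.sum_prod_type]
    _ = ∑ pq ∈ univ.filter (fun pq : V × V => Adj pq.1 pq.2 = true), F pq.1 pq.2 := by
        refine Finset.sum_nbij orient (fun eb _ => by simpa using hadj eb) ?_ ?_ (fun _ _ => rfl)
        · rintro ⟨e, b⟩ - ⟨e', b'⟩ - h
          have he : e = e' := (huniq _ _ (hadj (e, b))).unique (hends (e, b)) (h ▸ hends (e', b'))
          subst he
          have hloop : e1 e ≠ e2 e := fun h => by simpa [h, hirr] using hedge e
          cases b <;> cases b' <;> simp only [orient, Prod.ext_iff] at h ⊢ <;> simp_all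
        · rintro ⟨p, q⟩ hpq
          obtain ⟨e, he, -⟩ := huniq p q (by simpa using hpq)
          rcases he with ⟨h1, h2⟩ | ⟨h1, h2⟩
          · exact ⟨(e, true), by simp, by simp [orient, h1, h2]⟩
          · exact ⟨(e, false), by simp, by simp [orient, h1, h2]⟩
    _ = ∑ p, ∑ q ∈ univ.filter (fun q => Adj p q = true), F p q := by
        simp only [Finset.sum_filter, Fintype.sum_prod_type]

variable [DecidableEq V]

lemma sum_mul_incidenceSign_mul_incidenceSign {R : Type*} [CommRing R]
    (hsym : ∀ i j, Adj i j = Adj j i) (hirr : ∀ i, Adj i i = false)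
    (hedge : ∀ e : ι, Adj (e1 e) (e2 e) = true)
    (huniq : ∀ i j, Adj i j = true →
      ∃! e : ι, (e1 e = i ∧ e2 e = j) ∨ (e1 e = j ∧ e2 e = i))
    (c : V → V → R) (hc : ∀ p q, c p q = c q p) (i j : V) :
    ∑ e, c (e1 e) (e2 e) * (incidenceSign (e1 e) (e2 e) i * incidenceSign (e1 e) (e2 e) j) =
      (if i = j then ∑ k ∈ univ.filter (fun k => Adj i k = true), c i k else 0) -
        if Adj i j then c i j else 0 := by
  let F : V → V → R := fun p q => if i = p then c p q * incidenceSign p q j else 0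
  calc _ = ∑ e, (F (e1 e) (e2 e) + F (e2 e) (e1 e)) := by
        refine Finset.sum_congr rfl fun e _ => ?_
        have hloop : e1 e ≠ e2 e := fun h => by simpa [h, hirr] using hedge e
        simp only [F, incidenceSign_mul_incidenceSign hloop, hc (e2 e) (e1 e), mul_add, mul_ite,
          mul_zero]
    _ = ∑ k ∈ univ.filter (fun k => Adj i k = true), c i k * incidenceSign i k j := by
        rw [sum_add_swap_eq_sum_adj Adj e1 e2 hsym hirr hedge huniq]
        simp [F, Finset.sum_ite_irrel]
    _ = ∑ k ∈ univ.filter (fun k => Adj i k = true),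
          ((if j = i then c i k else 0) - if j = k then c i k else 0) := by
        refine Finset.sum_congr rfl fun k hk => ?_
        have hik : i ≠ k := fun h => by simp [h, hirr] at hk
        rw [incidenceSign_of_ne hik]
        simp only [mul_sub, mul_ite, mul_one, mul_zero]
    _ = _ := by
        rw [Finset.sum_sub_distrib]
        simp [Finset.sum_ite_irrel, @eq_comm _ j i]

end OrientedEdges

section Rigidity

variable {N : ℕ} (x y : Fin N → ℝ) (σ α : ℝ)

lemma edist2_comm (p q : Fin N) : edist2 x y p q = edist2 x y q p := by
  simp only [edist2]; ring_nf

noncomputable def edgeGram (p q : Fin N) (a b : Fin 2) : ℝ :=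
  (![x, y] a p - ![x, y] a q) / (σ * edist2 x y p q ^ α) *
    ((![x, y] b p - ![x, y] b q) / (σ * edist2 x y p q ^ α))

lemma edgeGram_comm (p q : Fin N) (a b : Fin 2) :
    edgeGram x y σ α p q a b = edgeGram x y σ α q p a b := by
  simp only [edgeGram, edist2_comm x y p q]; ring

lemma offBlock_apply (Adj : Fin N → Fin N → Bool) (p q : Fin N) (a b : Fin 2) :
    offBlock x y Adj σ α p q a b = -if Adj p q then edgeGram x y σ α p q a b else 0 := by
  have hweight : σ ^ 2 * edist2 x y p q ^ (2 * α) = (σ * edist2 x y p q ^ α) ^ 2 := by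
    have hd : 0 ≤ edist2 x y p q := Real.sqrt_nonneg _
    rw [mul_pow, mul_comm 2 α, Real.rpow_mul hd, Real.rpow_two]
  by_cases h : Adj p q
  · simp only [offBlock, edgeGram, h, hweight]
    fin_cases a <;> fin_cases b <;> simp <;> ring
  · simp [offBlock, h]

lemma Fbar1_apply (Adj : Fin N → Fin N → Bool) (a b : Fin 2) (i j : Fin N) :
    Fbar1 x y Adj σ α (a, i) (b, j) = fimBlock x y Adj σ α i j a b := by
  simp [Fbar1, permP, Fbar, mul_apply, Fintype.sum_prod_type, Prod.ext_iff, ite_and]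

lemma rigidityR_mul_rigidityR {ι : Type*} (e1 e2 : ι → Fin N) (e : ι) (a b : Fin 2)
    (i j : Fin N) :
    rigidityR x y σ α e1 e2 e (a, i) * rigidityR x y σ α e1 e2 e (b, j) =
      edgeGram x y σ α (e1 e) (e2 e) a b *
        (incidenceSign (e1 e) (e2 e) i * incidenceSign (e1 e) (e2 e) j) := by
  simp only [rigidityR, of_apply, edgeGram, incidenceSign]; ring

end Rigidity

theorem fbar1_eq_rigidity_transpose_mul_rigidity_general
    (n m : ℕ) (x y : Fin (n + m) → ℝ) (Adj : Fin (n + m) → Fin (n + m) → Bool)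
    (hsym : ∀ i j, Adj i j = Adj j i) (hirr : ∀ i, Adj i i = false)
    (σ α : ℝ)
    {ι : Type*} [Fintype ι]
    (e1 e2 : ι → Fin (n + m))
    (hedge : ∀ e : ι, Adj (e1 e) (e2 e) = true)
    (huniq : ∀ i j, Adj i j = true →
      ∃! e : ι, (e1 e = i ∧ e2 e = j) ∨ (e1 e = j ∧ e2 e = i)) :
    Fbar1 x y Adj σ α = (rigidityR x y σ α e1 e2)ᵀ * rigidityR x y σ α e1 e2 := by
  ext ⟨a, i⟩ ⟨b, j⟩
  rw [Fbar1_apply, mul_apply]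
  simp only [transpose_apply, rigidityR_mul_rigidityR]
  rw [sum_mul_incidenceSign_mul_incidenceSign Adj e1 e2 hsym hirr hedge huniq
    (fun p q => edgeGram x y σ α p q a b) (fun p q => edgeGram_comm x y σ α p q a b)]
  by_cases hij : i = j
  · subst hij
    rw [fimBlock, if_pos rfl, neg_apply, Matrix.sum_apply, ← Finset.sum_neg_distrib]
    simp only [if_true, hirr, Bool.false_eq_true, if_false, sub_zero]
    refine Finset.sum_congr rfl fun k hk => ?_
    simp [offBlock_apply, (Finset.mem_filter.1 hk).2]
  · simp [fimBlock, offBlock_apply, hij]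

/-- `F̄₁(p) = R(p)ᵀ R(p)`. -/
theorem fbar1_eq_rigidity_transpose_mul_rigidity
    (n m : ℕ) (x y : Fin (n + m) → ℝ) (Adj : Fin (n + m) → Fin (n + m) → Bool)
    (hsym : ∀ i j, Adj i j = Adj j i) (hirr : ∀ i, Adj i i = false)
    (hne : ∀ i j, Adj i j = true → (x i, y i) ≠ (x j, y j))
    (σ α : ℝ) (hσ : 0 < σ)
    {ι : Type*} [Fintype ι]
    (e1 e2 : ι → Fin (n + m))
    (hedge : ∀ e : ι, Adj (e1 e) (e2 e) = true)
    (huniq : ∀ i j, Adj i j = true →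
      ∃! e : ι, (e1 e = i ∧ e2 e = j) ∨ (e1 e = j ∧ e2 e = i)) :
    Fbar1 x y Adj σ α = (rigidityR x y σ α e1 e2)ᵀ * rigidityR x y σ α e1 e2 :=
  fbar1_eq_rigidity_transpose_mul_rigidity_general n m x y Adj hsym hirr σ α e1 e2 hedge huniq
end

section
/- Fix p_i, p_j ∈ ℝ² with u = p_i − p_j ≠ 0 and d = ‖u‖, and σ > 0. For s ∈ ℝ define ℓ(q, s) = −(s − ln‖q − p_j‖)²/(2σ²), the log-density (up to an additive constant independent of q) of a log-normal range measurement with ln θ ~ N(ln‖q − p_j‖, σ²). Then the expectation, when s is distributed as N(ln d, σ²), of the negative Hessian of q ↦ ℓ(q, s) evaluated at q = p_i equals (1/(σ² d⁴)) u uᵀ; that is, the single-measurement Fisher information matrix for the multiplicative log-normal range model is (1/(σ² d⁴)) (p_i − p_j)(p_i − p_j)ᵀ. -/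
/-!
For a Gaussian location model with mean `g q`, the Hessian of `q ↦ -(s - g q)²/(2σ²)` is
`((s - g q) ∇²g - ∇g ∇gᵀ)/σ²`. Under `s ~ N(g x, σ²)` the first term has mean zero, so the
expected negative Hessian at `x` is `∇g ∇gᵀ/σ²`. For `g q = log ‖q - p_j‖` the gradient at `p_i`
is `u/‖u‖²`, which gives `u uᵀ/(σ² ‖u‖⁴)`.
-/

open MeasureTheory ProbabilityTheory Filter Topology
open scoped NNReal

section GaussianLocationModel

variable {E : Type*} [NormedAddCommGroup E] [NormedSpace ℝ E]

lemma hasDerivAt_neg_sub_sq_div (s c t : ℝ) :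
    HasDerivAt (fun t => -(s - t) ^ 2 / (2 * c)) ((s - t) / c) t := by
  refine ((((hasDerivAt_id t).const_sub s).pow 2).neg.div_const (2 * c)).congr_deriv ?_
  rcases eq_or_ne c 0 with rfl | hc
  · simp
  · field_simp
    simp

lemma fderiv_neg_sub_sq_div {g : E → ℝ} {q : E} (s c : ℝ) (hg : DifferentiableAt ℝ g q) :
    fderiv ℝ (fun q' => -(s - g q') ^ 2 / (2 * c)) q = ((s - g q) / c) • fderiv ℝ g q :=
  ((hasDerivAt_neg_sub_sq_div s c (g q)).comp_hasFDerivAt q hg.hasFDerivAt).fderiv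

lemma fderiv_fderiv_neg_sub_sq_div {g : E → ℝ} {x : E} (hg : ContDiffAt ℝ 2 g x)
    (s c : ℝ) (v w : E) :
    fderiv ℝ (fun q => fderiv ℝ (fun q' => -(s - g q') ^ 2 / (2 * c)) q w) x v =
      ((s - g x) * fderiv ℝ (fderiv ℝ g) x v w - fderiv ℝ g x v * fderiv ℝ g x w) / c := by
  have hd : ∀ᶠ q in 𝓝 x, DifferentiableAt ℝ g q :=
    (hg.eventually (by simp)).mono fun q hq => hq.differentiableAt (by simp)
  have hd2 : DifferentiableAt ℝ (fderiv ℝ g) x :=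
    (hg.fderiv_right (m := 1) le_rfl).differentiableAt one_ne_zero
  have hloc : (fun q => fderiv ℝ (fun q' => -(s - g q') ^ 2 / (2 * c)) q w)
      =ᶠ[𝓝 x] fun q => (s - g q) * fderiv ℝ g q w * c⁻¹ := by
    filter_upwards [hd] with q hq
    rw [fderiv_neg_sub_sq_div s c hq, smul_apply, smul_eq_mul]
    ring
  have hsub : HasFDerivAt (fun q => s - g q) (-fderiv ℝ g x) x :=
    hd.self_of_nhds.hasFDerivAt.const_sub s
  have hprod : HasFDerivAt (fun q => (s - g q) * fderiv ℝ g q w * c⁻¹) _ x := (hsub.mul (hd2.hasFDerivAt.clm_apply (hasFDerivAt_const w x))).mul_const c⁻¹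
  rw [hloc.fderiv_eq, hprod.fderiv]
  simp
  ring

lemma integral_sub_mean_gaussianReal (m : ℝ) (v : ℝ≥0) :
    ∫ s, (s - m) ∂gaussianReal m v = 0 := by
  have hid : Integrable (fun s => s) (gaussianReal m v) :=
    (memLp_id_gaussianReal 1).integrable le_rfl
  rw [integral_sub hid (integrable_const m),
    integral_id_gaussianReal, integral_const, probReal_univ, one_smul, sub_self]

theorem integral_neg_fderiv_fderiv_neg_sub_sq_div_gaussianReal {g : E → ℝ} {x : E}
    (hg : ContDiffAt ℝ 2 g x) (σ : ℝ) (v w : E) :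
    ∫ s, -fderiv ℝ (fun q => fderiv ℝ (fun q' => -(s - g q') ^ 2 / (2 * σ ^ 2)) q w) x v
        ∂gaussianReal (g x) (σ ^ 2).toNNReal = fderiv ℝ g x v * fderiv ℝ g x w / σ ^ 2 := by
  set H := fderiv ℝ (fderiv ℝ g) x v w / σ ^ 2
  have h : ∀ s, -fderiv ℝ (fun q => fderiv ℝ (fun q' => -(s - g q') ^ 2 / (2 * σ ^ 2)) q w) x v
      = fderiv ℝ g x v * fderiv ℝ g x w / σ ^ 2 - (s - g x) * H := fun s => by
    rw [fderiv_fderiv_neg_sub_sq_div hg]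
    ring
  have hint : Integrable (fun s => (s - g x) * H) (gaussianReal (g x) (σ ^ 2).toNNReal) :=
    (((memLp_id_gaussianReal 1).integrable le_rfl).sub (integrable_const _)).mul_const _
  simp_rw [h]
  rw [integral_sub (integrable_const _) hint, integral_mul_const, integral_sub_mean_gaussianReal]
  simp

end GaussianLocationModel

section LogDistance

variable {F : Type*} [NormedAddCommGroup F] [InnerProductSpace ℝ F] {p x : F}

lemma contDiffAt_log_norm_sub {n : WithTop ℕ∞} (hx : x ≠ p) :
    ContDiffAt ℝ n (fun q => Real.log ‖q - p‖) x :=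
  ((contDiffAt_id.sub contDiffAt_const).norm ℝ (sub_ne_zero.2 hx)).log
    (norm_ne_zero_iff.2 (sub_ne_zero.2 hx))

lemma hasFDerivAt_log_norm_sub (hx : x ≠ p) :
    HasFDerivAt (fun q => Real.log ‖q - p‖) ((‖x - p‖ ^ 2)⁻¹ • innerSL ℝ (x - p)) x := by
  have hn : ‖x - p‖ ^ 2 ≠ 0 := by simpa [sub_eq_zero] using hx
  have h := (((hasFDerivAt_id x).sub_const p).norm_sq.log hn).const_mul (2⁻¹ : ℝ)
  simp only [Real.log_pow, id] at h
  refine (h.congr_fderiv ?_).congr_of_eventuallyEq (Eventually.of_forall fun q => ?_)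
  · ext y
    simp
    ring
  · push_cast
    ring

end LogDistance

theorem fisher_info_lognormal_range_general
    (pi pj : EuclideanSpace ℝ (Fin 2)) (hne : pi ≠ pj) (σ : ℝ) :
    ∀ a b : Fin 2,
      (∫ s : ℝ,
          -(fderiv ℝ
              (fun q : EuclideanSpace ℝ (Fin 2) =>
                fderiv ℝ
                  (fun q' : EuclideanSpace ℝ (Fin 2) =>
                    -(s - Real.log ‖q' - pj‖) ^ 2 / (2 * σ ^ 2))
                  q (EuclideanSpace.single b 1))
              pi (EuclideanSpace.single a 1))
        ∂(gaussianReal (Real.log ‖pi - pj‖) (Real.toNNReal (σ ^ 2)))) =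
      (1 / (σ ^ 2 * ‖pi - pj‖ ^ 4)) * ((pi - pj) a * (pi - pj) b) := by
  intro a b
  rw [integral_neg_fderiv_fderiv_neg_sub_sq_div_gaussianReal (contDiffAt_log_norm_sub hne),
    (hasFDerivAt_log_norm_sub hne).fderiv]
  simp [EuclideanSpace.inner_single_right]
  ring

/-- For the multiplicative log-normal range model with log-density
`ℓ(q, s) = -(s - ln ‖q - p_j‖)²/(2σ²)`, the expectation under `s ~ N(ln d, σ²)` of the negative
Hessian of `q ↦ ℓ(q, s)` at `q = p_i` equals `(1/(σ² d⁴)) u uᵀ`, entrywise: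
its `(a, b)` entry is `(1/(σ² d⁴)) u_a u_b`, where `u = p_i - p_j` and `d = ‖u‖`. -/
theorem fisher_info_lognormal_range
    (pi pj : EuclideanSpace ℝ (Fin 2)) (hne : pi ≠ pj) (σ : ℝ) (hσ : 0 < σ) :
    ∀ a b : Fin 2,
      (∫ s : ℝ,
          -(fderiv ℝ
              (fun q : EuclideanSpace ℝ (Fin 2) =>
                fderiv ℝ
                  (fun q' : EuclideanSpace ℝ (Fin 2) =>
                    -(s - Real.log ‖q' - pj‖) ^ 2 / (2 * σ ^ 2))
                  q (EuclideanSpace.single b 1))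
              pi (EuclideanSpace.single a 1))
        ∂(gaussianReal (Real.log ‖pi - pj‖) (Real.toNNReal (σ ^ 2)))) =
      (1 / (σ ^ 2 * ‖pi - pj‖ ^ 4)) * ((pi - pj) a * (pi - pj) b) :=
  fisher_info_lognormal_range_general pi pj hne σ
end
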